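/- arXiv:2310.08299 — 7 statements merged into one kernel-verified Lean document; each statement's English description precedes it below -/
import Mathlib

section
/- Let (A,⋆,[−,−]) be a PZL algebra, i.e., (A,⋆) is a Zinbiel algebra, (A,[−,−]) is a Lie algebra, and [x⋆y + y⋆x, z] = x⋆[y,z] + y⋆[x,z] and [x,y]⋆z = [x, y⋆z] − y⋆[x,z] hold for all x,y,z. Then (A,·,[−,−]) with x·y = x⋆y + y⋆x is a Poisson algebra. -/
theorem stmt_9 (K : Type*) [Field K] (A : Type*) [AddCommGroup A] [Module K A]
    (star : A →ₗ[K] A →ₗ[K] A)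
    (hzin : ∀ x y z : A, star x (star y z) = star (star x y) z + star (star y x) z)
    (br : A →ₗ[K] A →ₗ[K] A)
    (hskew : ∀ x y : A, br x y = - br y x)
    (hjac : ∀ x y z : A, br (br x y) z + br (br y z) x + br (br z x) y = 0)
    (h1 : ∀ x y z : A,
      br (star x y + star y x) z = star x (br y z) + star y (br x z))
    (h2 : ∀ x y z : A,
      star (br x y) z = br x (star y z) - star y (br x z)) :
    (∀ x y : A, star x y + star y x = star y x + star x y)
    ∧ (∀ x y z : A,
        star (star x y + star y x) z + star z (star x y + star y x)
          = star x (star y z + star z y) + star (star y z + star z y) x)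
    ∧ (∀ x y z : A,
        br z (star x y + star y x)
          = (star (br z x) y + star y (br z x)) + (star x (br z y) + star (br z y) x)) := by
  refine ⟨fun x y => add_comm _ _, fun x y z => ?_, fun x y z => ?_⟩
  · simp only [map_add, LinearMap.add_apply, hzin]
    abel
  · simp only [map_add, LinearMap.add_apply, h2]
    abel
end

section
/- Let (A,⋆,∘) be a pre-Poisson algebra, i.e., (A,⋆) is a Zinbiel algebra, (A,∘) is a pre-Lie algebra, and (x⋆y + y⋆x)∘z = x⋆(y∘z) + y⋆(x∘z) and (x∘y − y∘x)⋆z = x∘(y⋆z) − y⋆(x∘z) hold. Then (A,·,[−,−]) with x·y := x⋆y + y⋆x and [x,y] := x∘y − y∘x is a Poisson algebra. -/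
theorem stmt_10 (K : Type*) [Field K] (A : Type*) [AddCommGroup A] [Module K A]
    (star : A →ₗ[K] A →ₗ[K] A)
    (hzin : ∀ x y z : A, star x (star y z) = star (star x y) z + star (star y x) z)
    (circ : A →ₗ[K] A →ₗ[K] A)
    (hpre : ∀ x y z : A,
      circ (circ x y) z - circ x (circ y z) = circ (circ y x) z - circ y (circ x z))
    (h1 : ∀ x y z : A,
      circ (star x y + star y x) z = star x (circ y z) + star y (circ x z))
    (h2 : ∀ x y z : A,
      star (circ x y - circ y x) z = circ x (star y z) - star y (circ x z)) :
    (∀ x y : A, star x y + star y x = star y x + star x y)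
    ∧ (∀ x y z : A,
        star (star x y + star y x) z + star z (star x y + star y x)
          = star x (star y z + star z y) + star (star y z + star z y) x)
    ∧ (∀ x y z : A,
        circ (circ x y - circ y x) z - circ z (circ x y - circ y x)
          + (circ (circ y z - circ z y) x - circ x (circ y z - circ z y))
          + (circ (circ z x - circ x z) y - circ y (circ z x - circ x z)) = 0)
    ∧ (∀ x y z : A,
        circ z (star x y + star y x) - circ (star x y + star y x) z
          = (star (circ z x - circ x z) y + star y (circ z x - circ x z))
            + (star x (circ z y - circ y z) + star (circ z y - circ y z) x)) := by
  refine ⟨fun x y => add_comm _ _, fun x y z => ?_, fun x y z => ?_, fun x y z => ?_⟩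
  · simp only [map_add, LinearMap.add_apply, hzin]
    abel
  · have f1 : circ (circ x y) z - circ x (circ y z) - (circ (circ y x) z - circ y (circ x z)) = 0 :=
      sub_eq_zero.mpr (hpre x y z)
    have f2 : circ (circ y z) x - circ y (circ z x) - (circ (circ z y) x - circ z (circ y x)) = 0 :=
      sub_eq_zero.mpr (hpre y z x)
    have f3 : circ (circ z x) y - circ z (circ x y) - (circ (circ x z) y - circ x (circ z y)) = 0 :=
      sub_eq_zero.mpr (hpre z x y)
    simp only [map_sub, LinearMap.sub_apply]
    calc circ (circ x y) z - circ (circ y x) z - (circ z (circ x y) - circ z (circ y x))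
          + (circ (circ y z) x - circ (circ z y) x - (circ x (circ y z) - circ x (circ z y)))
          + (circ (circ z x) y - circ (circ x z) y - (circ y (circ z x) - circ y (circ x z)))
        = (circ (circ x y) z - circ x (circ y z) - (circ (circ y x) z - circ y (circ x z)))
          + (circ (circ y z) x - circ y (circ z x) - (circ (circ z y) x - circ z (circ y x)))
          + (circ (circ z x) y - circ z (circ x y) - (circ (circ x z) y - circ x (circ z y))) := by
          abel
      _ = 0 := by rw [f1, f2, f3]; abel
  · rw [h1 x y z, h2 z x y, h2 z y x]
    simp only [map_add, map_sub, LinearMap.add_apply, LinearMap.sub_apply]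
    abel
end

section
/- Let (A,·,∘) be a TCPO algebra, i.e., (A,·) is commutative associative, (A,∘) is pre-Lie, and 2x·(y∘z) = (x·y)∘z + y∘(x·z) and 2z·(x∘y − y∘x) = x∘(z·y) − y∘(z·x) hold. Then (A,·,[−,−]) with [x,y] = x∘y − y∘x is a transposed Poisson algebra. -/
theorem stmt_12 (K : Type*) [Field K] (A : Type*) [AddCommGroup A] [Module K A]
    (mul : A →ₗ[K] A →ₗ[K] A)
    (hcomm : ∀ x y : A, mul x y = mul y x)
    (hassoc : ∀ x y z : A, mul (mul x y) z = mul x (mul y z))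
    (circ : A →ₗ[K] A →ₗ[K] A)
    (hpre : ∀ x y z : A,
      circ (circ x y) z - circ x (circ y z) = circ (circ y x) z - circ y (circ x z))
    (h1 : ∀ x y z : A, 2 • mul x (circ y z) = circ (mul x y) z + circ y (mul x z))
    (h2 : ∀ x y z : A,
      2 • mul z (circ x y - circ y x) = circ x (mul z y) - circ y (mul z x)) :
    (∀ x y z : A,
        circ (circ x y - circ y x) z - circ z (circ x y - circ y x)
          + (circ (circ y z - circ z y) x - circ x (circ y z - circ z y))
          + (circ (circ z x - circ x z) y - circ y (circ z x - circ x z)) = 0)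
    ∧ (∀ x y z : A,
        2 • mul z (circ x y - circ y x)
          = (circ (mul z x) y - circ y (mul z x)) + (circ x (mul z y) - circ (mul z y) x)) := by
  constructor
  · intro x y z
    have p1 := hpre x y z
    have p2 := hpre y z x
    have p3 := hpre z x y
    simp only [map_sub, LinearMap.sub_apply]
    abel_nf
    abel_nf at p1 p2 p3
    linear_combination (norm := abel_nf) p1 + p2 + p3
  · intro x y z
    have a1 := h1 z x y
    have a2 := h1 z y x
    simp only [map_sub]
    linear_combination (norm := abel_nf) a1 - a2
end

section
/- Let (A,⋆) be a Zinbiel algebra and P a derivation of (A,⋆). Define x∘y := P(x)⋆y − x⋆P(y). Then (A,∘) is a pre-Lie algebra, and moreover (A,⋆,∘) is a TZPO algebra, i.e., 2x⋆(y∘z) = (x⋆y + y⋆x)∘z + y∘(x⋆z) and 2(x∘y − y∘x)⋆z = x∘(y⋆z) − y∘(x⋆z) hold for all x,y,z. -/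
theorem stmt_14 (K : Type*) [Field K] (A : Type*) [AddCommGroup A] [Module K A]
    (star : A →ₗ[K] A →ₗ[K] A)
    (hzin : ∀ x y z : A, star x (star y z) = star (star x y) z + star (star y x) z)
    (P : A →ₗ[K] A)
    (hder : ∀ x y : A, P (star x y) = star (P x) y + star x (P y))
    (circ : A →ₗ[K] A →ₗ[K] A)
    (hcirc : ∀ x y : A, circ x y = star (P x) y - star x (P y)) :
    (∀ x y z : A,
        circ (circ x y) z - circ x (circ y z) = circ (circ y x) z - circ y (circ x z))
    ∧ (∀ x y z : A,
        2 • star x (circ y z) = circ (star x y + star y x) z + circ y (star x z))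
    ∧ (∀ x y z : A,
        2 • star (circ x y - circ y x) z = circ x (star y z) - circ y (star x z)) := by
  refine ⟨fun x y z => ?_, fun x y z => ?_, fun x y z => ?_⟩ <;>
  · simp only [hcirc, hder, map_add, map_sub, LinearMap.add_apply, LinearMap.sub_apply,
      two_smul]
    simp only [hzin, map_add, map_sub, LinearMap.add_apply, LinearMap.sub_apply]
    abel
end

section
/- Let (A,⋆,∘) be a TZPO algebra, i.e., (A,⋆) is a Zinbiel algebra, (A,∘) is a pre-Lie algebra, and 2x⋆(y∘z) = (x⋆y + y⋆x)∘z + y∘(x⋆z) and 2(x∘y − y∘x)⋆z = x∘(y⋆z) − y∘(x⋆z) hold. Then (A, ·, [−,−]) with x·y = x⋆y + y⋆x and [x,y] = x∘y − y∘x is a transposed Poisson algebra. -/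
theorem stmt_15 (K : Type*) [Field K] (A : Type*) [AddCommGroup A] [Module K A]
    (star : A →ₗ[K] A →ₗ[K] A)
    (hzin : ∀ x y z : A, star x (star y z) = star (star x y) z + star (star y x) z)
    (circ : A →ₗ[K] A →ₗ[K] A)
    (hpre : ∀ x y z : A,
      circ (circ x y) z - circ x (circ y z) = circ (circ y x) z - circ y (circ x z))
    (h1 : ∀ x y z : A,
      2 • star x (circ y z) = circ (star x y + star y x) z + circ y (star x z))
    (h2 : ∀ x y z : A,
      2 • star (circ x y - circ y x) z = circ x (star y z) - circ y (star x z)) :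
    (∀ x y : A, star x y + star y x = star y x + star x y)
    ∧ (∀ x y z : A,
        star (star x y + star y x) z + star z (star x y + star y x)
          = star x (star y z + star z y) + star (star y z + star z y) x)
    ∧ (∀ x y z : A,
        circ (circ x y - circ y x) z - circ z (circ x y - circ y x)
          + (circ (circ y z - circ z y) x - circ x (circ y z - circ z y))
          + (circ (circ z x - circ x z) y - circ y (circ z x - circ x z)) = 0)
    ∧ (∀ x y z : A,
        2 • (star z (circ x y - circ y x) + star (circ x y - circ y x) z)
          = (circ (star z x + star x z) y - circ y (star z x + star x z))
            + (circ x (star z y + star y z) - circ (star z y + star y z) x)) := by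
  refine ⟨fun x y => add_comm _ _, fun x y z => ?_, fun x y z => ?_, fun x y z => ?_⟩
  · simp only [map_add, LinearMap.add_apply, hzin]; abel
  · simp only [map_sub, map_add, LinearMap.add_apply, LinearMap.sub_apply]
    linear_combination (norm := abel) hpre x y z + hpre y z x + hpre z x y
  · have e1 := h1 z x y
    have e2 := h1 z y x
    have e3 := h2 x y z
    simp only [map_sub, map_add, smul_add, smul_sub, LinearMap.add_apply,
      LinearMap.sub_apply, LinearMap.smul_apply] at e1 e2 e3 ⊢
    linear_combination (norm := abel) e1 - e2 + e3
end

section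
/- Let (A,·,[−,−]) be a transposed Poisson algebra, (μ,V) a representation of the commutative associative algebra (A,·), and (ρ,V) a representation of the Lie algebra (A,[−,−]). Then (−μ*, ρ*, V*) is a representation of the transposed Poisson algebra (A,·,[−,−]) if and only if 2ρ(y)μ(x) = ρ(x·y) + μ(x)ρ(y) and 2μ([x,y]) = μ(x)ρ(y) − μ(y)ρ(x) for all x,y in A. -/
private lemma dual_eq_of_dualMap_eq {K : Type*} [Field K] {V' : Type*} [AddCommGroup V']
    [Module K V'] {f g : Module.End K V'} (h : f.dualMap = g.dualMap) : f = g := by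
  ext v
  rw [← sub_eq_zero, ← Module.forall_dual_apply_eq_zero_iff K]
  intro φ
  have h2 : f.dualMap φ v = g.dualMap φ v := by rw [h]
  simp only [LinearMap.dualMap_apply] at h2
  simp [map_sub, h2]

theorem stmt_16 (K : Type*) [Field K] (A : Type*) [AddCommGroup A] [Module K A]
    (V' : Type*) [AddCommGroup V'] [Module K V']
    (mul : A →ₗ[K] A →ₗ[K] A)
    (hcomm : ∀ x y : A, mul x y = mul y x)
    (hassoc : ∀ x y z : A, mul (mul x y) z = mul x (mul y z))
    (br : A →ₗ[K] A →ₗ[K] A)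
    (hskew : ∀ x y : A, br x y = - br y x)
    (hjac : ∀ x y z : A, br (br x y) z + br (br y z) x + br (br z x) y = 0)
    (htleib : ∀ x y z : A,
      2 • mul z (br x y) = br (mul z x) y + br x (mul z y))
    (mu rho : A →ₗ[K] Module.End K V')
    (hmu : ∀ x y : A, mu (mul x y) = mu x * mu y)
    (hrho : ∀ x y : A, rho (br x y) = rho x * rho y - rho y * rho x) :
    ((∀ x y : A, (mu (mul x y)).dualMap = (mu x).dualMap ∘ₗ (mu y).dualMap)
    ∧ (∀ x y : A,
        -(rho (br x y)).dualMap
          = (-(rho x).dualMap) ∘ₗ (-(rho y).dualMap)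
            - (-(rho y).dualMap) ∘ₗ (-(rho x).dualMap))
    ∧ (∀ x y : A,
        2 • ((mu x).dualMap ∘ₗ (-(rho y).dualMap))
          = -(rho (mul x y)).dualMap + (-(rho y).dualMap) ∘ₗ (mu x).dualMap)
    ∧ (∀ x y : A,
        2 • (mu (br x y)).dualMap
          = (-(rho x).dualMap) ∘ₗ (mu y).dualMap - (-(rho y).dualMap) ∘ₗ (mu x).dualMap))
    ↔ ((∀ x y : A, 2 • (rho y * mu x) = rho (mul x y) + mu x * rho y)
        ∧ (∀ x y : A, 2 • mu (br x y) = mu x * rho y - mu y * rho x)) := by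
  constructor
  · rintro ⟨-, -, h3, h4⟩
    constructor
    · intro x y
      apply dual_eq_of_dualMap_eq (K := K)
      ext φ v
      have h := congrFun (congrArg DFunLike.coe (congrFun (congrArg DFunLike.coe (h3 x y)) φ)) v
      simp only [LinearMap.smul_apply, LinearMap.comp_apply, LinearMap.neg_apply,
        LinearMap.add_apply, LinearMap.dualMap_apply, map_neg, map_add, map_smul,
        LinearMap.sub_apply, map_sub, Module.End.mul_apply, smul_eq_mul, two_smul] at h ⊢
      linear_combination -h
    · intro x y
      apply dual_eq_of_dualMap_eq (K := K)
      ext φ v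
      have h := congrFun (congrArg DFunLike.coe (congrFun (congrArg DFunLike.coe (h4 x y)) φ)) v
      simp only [LinearMap.smul_apply, LinearMap.comp_apply, LinearMap.neg_apply,
        LinearMap.add_apply, LinearMap.dualMap_apply, map_neg, map_add, map_smul,
        LinearMap.sub_apply, map_sub, Module.End.mul_apply, smul_eq_mul, two_smul] at h ⊢
      linear_combination h
  · rintro ⟨h1, h2⟩
    refine ⟨?_, ?_, ?_, ?_⟩
    · intro x y
      ext φ v
      have h : mu (mul x y) = mu y * mu x := by rw [hcomm, hmu]
      simp [LinearMap.dualMap_apply, h]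
    · intro x y
      ext φ v
      simp only [hrho, LinearMap.smul_apply, LinearMap.comp_apply, LinearMap.neg_apply,
        LinearMap.add_apply, LinearMap.dualMap_apply, map_neg, map_add,
        LinearMap.sub_apply, map_sub, Module.End.mul_apply, smul_eq_mul, two_smul]
      ring
    · intro x y
      ext φ v
      have h' : φ ((2 • (rho y * mu x)) v) = φ ((rho (mul x y) + mu x * rho y) v) := by
        rw [h1 x y]
      simp only [LinearMap.smul_apply, LinearMap.comp_apply, LinearMap.neg_apply,
        LinearMap.add_apply, LinearMap.dualMap_apply, map_neg, map_add,
        LinearMap.sub_apply, map_sub, Module.End.mul_apply, smul_eq_mul, two_smul] at h' ⊢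
      linear_combination -h'
    · intro x y
      ext φ v
      have h' : φ ((2 • mu (br x y)) v) = φ ((mu x * rho y - mu y * rho x) v) := by
        rw [h2 x y]
      simp only [LinearMap.smul_apply, LinearMap.comp_apply, LinearMap.neg_apply,
        LinearMap.add_apply, LinearMap.dualMap_apply, map_neg, map_add,
        LinearMap.sub_apply, map_sub, Module.End.mul_apply, smul_eq_mul, two_smul] at h' ⊢
      linear_combination h'
end

section
/- Let (A,·) be a commutative associative algebra with a derivation P. Define x∘y := P(x·y) + P(x)·y. Then (A,∘) is an anti-pre-Lie algebra, and the commutator satisfies x∘y − y∘x = P(x)·y − x·P(y) for all x,y. Moreover, (A,·,[−,−]) with [x,y] = P(x)·y − x·P(y) is a transposed Poisson algebra. -/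
theorem stmt_18 (K : Type*) [Field K] (A : Type*) [AddCommGroup A] [Module K A]
    (mul : A →ₗ[K] A →ₗ[K] A)
    (hcomm : ∀ x y : A, mul x y = mul y x)
    (hassoc : ∀ x y z : A, mul (mul x y) z = mul x (mul y z))
    (P : A →ₗ[K] A)
    (hder : ∀ x y : A, P (mul x y) = mul (P x) y + mul x (P y))
    (circ : A →ₗ[K] A →ₗ[K] A)
    (hcirc : ∀ x y : A, circ x y = P (mul x y) + mul (P x) y) :
    (∀ x y z : A,
        circ x (circ y z) - circ y (circ x z) = circ (circ y x - circ x y) z)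
    ∧ (∀ x y z : A,
        circ (circ x y - circ y x) z + circ (circ y z - circ z y) x
          + circ (circ z x - circ x z) y = 0)
    ∧ (∀ x y : A, circ x y - circ y x = mul (P x) y - mul x (P y))
    ∧ (∀ x y z : A,
        (mul (P (mul (P x) y - mul x (P y))) z - mul (mul (P x) y - mul x (P y)) (P z))
          + (mul (P (mul (P y) z - mul y (P z))) x - mul (mul (P y) z - mul y (P z)) (P x))
          + (mul (P (mul (P z) x - mul z (P x))) y - mul (mul (P z) x - mul z (P x)) (P y)) = 0)
    ∧ (∀ x y z : A,
        2 • mul z (mul (P x) y - mul x (P y))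
          = (mul (P (mul z x)) y - mul (mul z x) (P y))
            + (mul (P x) (mul z y) - mul x (P (mul z y)))) := by
  letI : NonUnitalNonAssocRing A :=
    { (inferInstance : AddCommGroup A) with
      mul := fun a b => mul a b
      left_distrib := fun a b c => map_add (mul a) b c
      right_distrib := fun a b c => by
        show mul (a + b) c = mul a c + mul b c
        simp [map_add]
      zero_mul := fun a => by show mul 0 a = 0; simp
      mul_zero := fun a => by show mul a 0 = 0; simp }
  letI : NonUnitalCommRing A :=
    { mul_assoc := hassoc, mul_comm := hcomm }
  letI : SMulCommClass K A A :=
    ⟨fun k a b => by show k • mul a b = mul a (k • b); simp⟩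
  letI : IsScalarTower K A A :=
    ⟨fun k a b => by show mul (k • a) b = k • mul a b; simp⟩
  have hmul : ∀ a b : A, mul a b = a * b := fun _ _ => rfl
  have key : ∀ a b : A, a = b ↔ ((a : Unitization K A) = (b : Unitization K A)) :=
    fun a b => ⟨fun h => by rw [h], fun h => Unitization.inr_injective h⟩
  refine ⟨fun x y z => ?_, fun x y z => ?_, fun x y => ?_, fun x y z => ?_, fun x y z => ?_⟩ <;>
  · simp only [hcirc, hder, map_add, map_sub, LinearMap.add_apply, LinearMap.sub_apply, two_smul]
    simp only [hmul]
    rw [key]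
    push_cast [Unitization.inr_add, Unitization.inr_sub, Unitization.inr_mul, Unitization.inr_zero]
    ring
end
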